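/- Let R be an n×n Hermitian positive definite complex matrix, X an n×n Hermitian positive semidefinite complex matrix, c' ≥ 0 a real number, and set M = R + X. Then the matrix B = c'·M⁻¹RM⁻¹ + R⁻¹ − M⁻¹ is Hermitian positive semidefinite. -/

import Mathlib

open Matrix
open scoped ComplexOrder

lemma psd_smul_real {n : ℕ} {A : Matrix (Fin n) (Fin n) ℂ} (hA : A.PosSemidef)
    {c : ℝ} (hc : 0 ≤ c) : ((c : ℂ) • A).PosSemidef := by
  constructor
  · have : star (c : ℂ) = (c : ℂ) := by simp
    simpa [Matrix.IsHermitian, Matrix.conjTranspose_smul, this] using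
      congrArg (fun B => (c : ℂ) • B) hA.1
  · intro x
    have h := hA.2 x
    have : (x.sum fun i xi => x.sum fun j xj => star xi * ((c : ℂ) • A) i j * xj)
        = (c : ℂ) * (x.sum fun i xi => x.sum fun j xj => star xi * A i j * xj) := by
      simp only [Finsupp.sum, Finset.mul_sum, Matrix.smul_apply, smul_eq_mul]
      refine Finset.sum_congr rfl fun i _ => Finset.sum_congr rfl fun j _ => ?_
      ring
    rw [this]
    exact mul_nonneg (by exact_mod_cast hc) h

/-- Positive semidefiniteness of the coefficient matrix `B_k` of Lemma 1:
for `R` Hermitian positive definite, `X` Hermitian positive semidefinite,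
`c' ≥ 0`, and `M = R + X`, the matrix `c'·M⁻¹RM⁻¹ + R⁻¹ − M⁻¹` is Hermitian
positive semidefinite. -/
theorem coefficient_matrix_posSemidef
    {n : ℕ} (R X : Matrix (Fin n) (Fin n) ℂ)
    (hR : R.PosDef) (hX : X.PosSemidef)
    (c' : ℝ) (hc' : 0 ≤ c')
    (M : Matrix (Fin n) (Fin n) ℂ) (hM : M = R + X) :
    (((c' : ℂ) • (M⁻¹ * R * M⁻¹) + R⁻¹ - M⁻¹)).PosSemidef := by
  have hMpd : M.PosDef := hM ▸ hR.add_posSemidef hX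
  have hRu : IsUnit R := hR.isUnit
  have hMu : IsUnit M := hMpd.isUnit
  have _iR : Invertible R := hRu.invertible
  have _iM : Invertible M := hMu.invertible
  -- the inner PSD matrix
  have hXRX : (X * R⁻¹ * X).PosSemidef := by
    have : (X * R⁻¹ * X) = Xᴴ * R⁻¹ * X := by rw [hX.1]
    rw [this]
    exact hR.inv.posSemidef.conjTranspose_mul_mul_same X
  have hA : ((c' : ℂ) • R + (X + X * R⁻¹ * X)).PosSemidef :=
    (psd_smul_real hR.posSemidef hc').add (hX.add hXRX)
  have hMinvH : M⁻¹ᴴ = M⁻¹ := hMpd.1.inv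
  -- congruence
  have key := hA.conjTranspose_mul_mul_same M⁻¹
  rw [hMinvH] at key
  -- algebraic identity
  have hid : M⁻¹ * ((c' : ℂ) • R + (X + X * R⁻¹ * X)) * M⁻¹
      = (c' : ℂ) • (M⁻¹ * R * M⁻¹) + R⁻¹ - M⁻¹ := by
    have hXMR : X = M - R := by rw [hM]; abel
    subst hXMR
    simp only [Matrix.mul_add, Matrix.add_mul, Matrix.mul_sub, Matrix.sub_mul,
      Matrix.mul_smul, Matrix.smul_mul, Matrix.mul_assoc,
      Matrix.inv_mul_of_invertible, Matrix.mul_inv_of_invertible,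
      Matrix.inv_mul_cancel_left_of_invertible, Matrix.mul_inv_cancel_left_of_invertible,
      Matrix.inv_mul_cancel_right_of_invertible, Matrix.mul_inv_cancel_right_of_invertible,
      Matrix.mul_one, Matrix.one_mul]
    abel
  rw [hid] at key
  exact key
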